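/- Let n be a positive integer and let f : ℝ → ℝ be any function. Then the sum over positive divisors d of n of μ(d)·f(ω(d)) equals (−1)^{ω(n)} · D_{ω(n)} f(0), where D_m denotes the m-th forward difference operator, μ is the Möbius function on the positive integers, and ω(n) is the number of distinct prime factors of n. -/
import Mathlib


/-- The `m`-th forward difference operator: `D₀ f = f`,
`D_{m+1} f x = D_m f (x+1) - D_m f x`. -/
def fwdDiffIter : ℕ → (ℝ → ℝ) → (ℝ → ℝ)
  | 0, f => f
  | m + 1, f => fun x => fwdDiffIter m f (x + 1) - fwdDiffIter m f x

lemma fwdDiffIter_eq (m : ℕ) (f : ℝ → ℝ) : fwdDiffIter m f = (fwdDiff (1 : ℝ))^[m] f := by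
  induction m with
  | zero => rfl
  | succ m ih =>
    funext x
    rw [Function.iterate_succ_apply']
    show fwdDiffIter m f (x + 1) - fwdDiffIter m f x = _
    rw [ih, fwdDiff]

/-- Classical analogue: `∑_{d ∣ n} μ(d) f(ω(d)) = (-1)^{ω(n)} D_{ω(n)} f (0)`,
where `ω(n)` is the number of distinct prime factors of `n`. -/
theorem stmt5 (n : ℕ) (hn : 0 < n) (f : ℝ → ℝ) :
    ∑ d ∈ n.divisors, (ArithmeticFunction.moebius d : ℝ) * f (d.primeFactors.card : ℝ)
      = (-1) ^ n.primeFactors.card * fwdDiffIter n.primeFactors.card f 0 := by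
  classical
  set m := n.primeFactors.card with hm
  -- RHS computation
  rw [fwdDiffIter_eq, fwdDiff_iter_eq_sum_shift]
  -- LHS: restrict to squarefree divisors
  rw [← Finset.sum_filter_of_ne (p := fun d => Squarefree d)
    (by
      intro d _ hd
      by_contra h
      rw [ArithmeticFunction.moebius_eq_zero_of_not_squarefree h] at hd
      simp at hd)]
  rw [Nat.sum_divisors_filter_squarefree hn.ne', Nat.factors_eq]
  have htf : (n.primeFactorsList : Multiset ℕ).toFinset = n.primeFactors := rfl
  rw [htf]
  have hterm : ∀ S ∈ n.primeFactors.powerset,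
      (ArithmeticFunction.moebius S.val.prod : ℝ) * f ((S.val.prod).primeFactors.card : ℝ)
        = (fun k : ℕ => (-1 : ℝ) ^ k * f (k : ℝ)) S.card := by
    intro S hS
    rw [Finset.mem_powerset] at hS
    have hprime : ∀ p ∈ S, p.Prime := fun p hp => Nat.prime_of_mem_primeFactors (hS hp)
    have hv : S.val.prod = ∏ p ∈ S, p := (Finset.prod_val S).symm ▸ rfl
    have hpf : (∏ p ∈ S, p).primeFactors = S := Nat.primeFactors_prod hprime
    have hmu : ArithmeticFunction.moebius (∏ p ∈ S, p) = (-1 : ℤ) ^ S.card := by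
      rw [ArithmeticFunction.isMultiplicative_moebius.map_prod _ S
        (fun i hi j hj hij => (Nat.coprime_primes (hprime i hi) (hprime j hj)).2 hij)]
      rw [Finset.prod_congr rfl (fun p hp => ArithmeticFunction.moebius_apply_prime (hprime p hp))]
      simp
    rw [hv, hpf, hmu]
    push_cast
    ring
  rw [Finset.sum_congr rfl hterm,
    Finset.sum_powerset_apply_card (fun k : ℕ => (-1 : ℝ) ^ k * f (k : ℝ)), ← hm]
  rw [Finset.mul_sum]
  refine Finset.sum_congr rfl fun k hk => ?_
  rw [Finset.mem_range, Nat.lt_succ_iff] at hk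
  have hsign : (-1 : ℝ) ^ m * (-1 : ℝ) ^ (m - k) = (-1 : ℝ) ^ k := by
    rw [← pow_add]
    have : m + (m - k) = 2 * (m - k) + k := by omega
    rw [this, pow_add, pow_mul]
    simp
  rw [nsmul_eq_mul, zsmul_eq_mul]
  push_cast
  simp only [zero_add, nsmul_eq_mul, mul_one]
  ring_nf
  rw [← hsign]
  ring
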